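/- Let p > 1 and q > 0, and let B be the complementary Young function of A(t) = t^p log(e+t)^q. Then there exists a constant C > 0 such that for all t ≥ e, B(t) ≤ C t^{p'} log(e+t)^{-q(p'-1)}, where p' = p/(p−1). -/

import Mathlib

open Real

theorem conjugate_young_asymptotics (p q : ℝ) (hp : 1 < p) (hq : 0 < q)
    (A B : ℝ → ℝ) (hA : ∀ t : ℝ, A t = t ^ p * (Real.log (Real.exp 1 + t)) ^ q)
    (hB : ∀ t : ℝ, 0 ≤ t → IsLUB {y : ℝ | ∃ s : ℝ, 0 ≤ s ∧ y = s * t - A s} (B t)) :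
    ∃ C : ℝ, 0 < C ∧ ∀ t : ℝ, Real.exp 1 ≤ t →
      B t ≤ C * t ^ (p / (p - 1)) *
        (Real.log (Real.exp 1 + t)) ^ (-q * (p / (p - 1) - 1)) := by
  have hp1 : 0 < p - 1 := by linarith
  set e : ℝ := Real.exp 1 with he
  have he1 : 1 < e := by
    have := Real.add_one_lt_exp (x := 1) one_ne_zero
    linarith [Real.exp_one_gt_d9, he]
  set a : ℝ := 1 / (2 * q) with ha
  have ha0 : 0 < a := by positivity
  set c₁ : ℝ := a ^ q / Real.sqrt 2 with hc₁
  have hc₁0 : 0 < c₁ := by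
    have : (0:ℝ) < a ^ q := Real.rpow_pos_of_pos ha0 q
    positivity
  set α : ℝ := 1 / (4 * (p - 1)) with hα
  have hα0 : 0 < α := by positivity
  set K : ℝ := max (α ^ (-(q / (p - 1)))) (max 1 (c₁ ^ (-(1 / (p - 1))))) with hK
  have hK1 : (1:ℝ) ≤ K := le_max_of_le_right (le_max_left _ _)
  have hK0 : 0 < K := lt_of_lt_of_le one_pos hK1
  refine ⟨K, hK0, fun t ht => ?_⟩
  have ht0 : 0 < t := lt_of_lt_of_le (by linarith) ht
  set L : ℝ := Real.log (e + t) with hL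
  have hL1 : 1 ≤ L := by
    rw [hL, he]
    calc (1:ℝ) = Real.log (Real.exp 1) := (Real.log_exp 1).symm
    _ ≤ _ := Real.log_le_log (Real.exp_pos 1) (by linarith)
  have hL0 : 0 < L := lt_of_lt_of_le one_pos hL1
  -- L^q ≤ (√2 / a^q) * t^(1/2)
  have hLq : L ^ q ≤ (Real.sqrt 2 / a ^ q) * t ^ ((1:ℝ)/2) := by
    have h1 : L ≤ (2 * t) ^ a / a := by
      calc L ≤ Real.log (2 * t) := Real.log_le_log (by linarith) (by linarith)
      _ ≤ (2 * t) ^ a / a := Real.log_le_rpow_div (by linarith) ha0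
    have h2 : L ^ q ≤ ((2 * t) ^ a / a) ^ q :=
      Real.rpow_le_rpow hL0.le h1 hq.le
    have h3 : ((2 * t) ^ a / a) ^ q = (2 * t) ^ (a * q) / a ^ q := by
      rw [Real.div_rpow (Real.rpow_nonneg (by linarith) _) ha0.le,
        ← Real.rpow_mul (by linarith : (0:ℝ) ≤ 2 * t)]
    have haq : a * q = 1/2 := by rw [ha]; field_simp
    have h4 : (2 * t) ^ (a * q) = Real.sqrt 2 * t ^ ((1:ℝ)/2) := by
      rw [haq, Real.mul_rpow (by norm_num) ht0.le, ← Real.sqrt_eq_rpow]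
    calc L ^ q ≤ (2 * t) ^ (a * q) / a ^ q := h2.trans_eq h3
    _ = (Real.sqrt 2 / a ^ q) * t ^ ((1:ℝ)/2) := by rw [h4]; ring
  set s₁ : ℝ := K * (t * L ^ (-q)) ^ ((1:ℝ)/(p-1)) with hs₁
  have htL0 : 0 < t * L ^ (-q) := by
    have := Real.rpow_pos_of_pos hL0 (-q); positivity
  have hs₁0 : 0 < s₁ := by
    have := Real.rpow_pos_of_pos htL0 ((1:ℝ)/(p-1)); positivity
  -- t * L^(-q) ≥ c₁ * t^(1/2)
  have htL : c₁ * t ^ ((1:ℝ)/2) ≤ t * L ^ (-q) := by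
    have hLqpos : 0 < L ^ q := Real.rpow_pos_of_pos hL0 q
    rw [Real.rpow_neg hL0.le, ← div_eq_mul_inv, le_div_iff₀ hLqpos]
    calc c₁ * t ^ ((1:ℝ)/2) * L ^ q ≤ c₁ * t ^ ((1:ℝ)/2) * ((Real.sqrt 2 / a ^ q) * t ^ ((1:ℝ)/2)) := by
          apply mul_le_mul_of_nonneg_left hLq
          positivity
    _ = t ^ ((1:ℝ)/2) * t ^ ((1:ℝ)/2) := by
          rw [hc₁]
          have : (0:ℝ) < a ^ q := Real.rpow_pos_of_pos ha0 q
          have h2 : (0:ℝ) < Real.sqrt 2 := by positivity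
          field_simp
    _ = t := by rw [← Real.rpow_add ht0]; norm_num
  -- log lower bound for s ≥ s₁
  have hlog : ∀ s : ℝ, s₁ ≤ s → α * L ≤ Real.log (e + s) := by
    intro s hs
    have hs0 : 0 < s := lt_of_lt_of_le hs₁0 hs
    have h1 : Real.log s₁ ≤ Real.log (e + s) :=
      Real.log_le_log hs₁0 (by linarith)
    have hlogs₁ : Real.log s₁ = Real.log K + (1/(p-1)) * Real.log (t * L ^ (-q)) := by
      rw [hs₁, Real.log_mul hK0.ne' (Real.rpow_pos_of_pos htL0 _).ne',
        Real.log_rpow htL0]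
    have hKc : 0 ≤ Real.log K + (1/(p-1)) * Real.log c₁ := by
      have hKge : c₁ ^ (-(1 / (p - 1))) ≤ K := le_max_of_le_right (le_max_right _ _)
      have := Real.log_le_log (Real.rpow_pos_of_pos hc₁0 _) hKge
      rw [Real.log_rpow hc₁0] at this
      nlinarith [this]
    have hlogt1 : 1 ≤ Real.log t := by
      calc (1:ℝ) = Real.log (Real.exp 1) := (Real.log_exp 1).symm
      _ ≤ _ := Real.log_le_log (Real.exp_pos 1) ht
    have hlogt0 : 0 ≤ Real.log t := by linarith
    have h2 : Real.log c₁ + (1/2) * Real.log t ≤ Real.log (t * L ^ (-q)) := by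
      have := Real.log_le_log (by positivity : (0:ℝ) < c₁ * t ^ ((1:ℝ)/2)) htL
      rwa [Real.log_mul hc₁0.ne' (Real.rpow_pos_of_pos ht0 _).ne',
        Real.log_rpow ht0] at this
    have hL2 : L ≤ 2 * Real.log t := by
      have hlog2 : Real.log 2 ≤ 1 := by
        calc Real.log 2 ≤ Real.log e := Real.log_le_log two_pos (by rw [he]; linarith [Real.exp_one_gt_d9])
        _ = 1 := by rw [he, Real.log_exp]
      calc L ≤ Real.log (2 * t) := Real.log_le_log (by linarith) (by linarith)
      _ ≤ 2 * Real.log t := by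
        rw [Real.log_mul two_ne_zero ht0.ne']
        linarith
    have hmono1 : (1/(p-1)) * (Real.log c₁ + (1/2) * Real.log t) ≤ (1/(p-1)) * Real.log (t * L ^ (-q)) :=
      mul_le_mul_of_nonneg_left h2 (by positivity)
    calc α * L ≤ α * (2 * Real.log t) := mul_le_mul_of_nonneg_left hL2 hα0.le
    _ = (1/(p-1)) * ((1/2) * Real.log t) := by rw [hα]; field_simp; ring
    _ ≤ Real.log K + (1/(p-1)) * (Real.log c₁ + (1/2) * Real.log t) := by
        have : (1/(p-1)) * (Real.log c₁ + (1/2) * Real.log t) = (1/(p-1)) * Real.log c₁ + (1/(p-1)) * ((1/2) * Real.log t) := by ring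
        linarith
    _ ≤ Real.log K + (1/(p-1)) * Real.log (t * L ^ (-q)) := by linarith
    _ = Real.log s₁ := hlogs₁.symm
    _ ≤ Real.log (e + s) := h1
  have hexp1 : (1:ℝ)/(p-1) + 1 = p/(p-1) := by field_simp; ring
  have hexp2 : -q * ((1:ℝ)/(p-1)) = -q * (p/(p-1) - 1) := by
    have h : p/(p-1) - 1 = 1/(p-1) := by field_simp; ring
    rw [h]
  have hid : s₁ * t = K * t ^ (p/(p-1)) * L ^ (-q * (p/(p-1) - 1)) := by
    rw [hs₁, Real.mul_rpow ht0.le (Real.rpow_nonneg hL0.le _),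
      ← Real.rpow_mul hL0.le, hexp2, ← hexp1, Real.rpow_add ht0, Real.rpow_one]
    ring
  have hRHS0 : 0 ≤ K * t ^ (p/(p-1)) * L ^ (-q * (p/(p-1) - 1)) := by
    have := Real.rpow_nonneg ht0.le (p/(p-1))
    have := Real.rpow_nonneg hL0.le (-q * (p/(p-1) - 1))
    positivity
  have hub : ∀ s : ℝ, 0 ≤ s → s * t - A s ≤ K * t ^ (p/(p-1)) * L ^ (-q * (p/(p-1) - 1)) := by
    intro s hs
    rw [hA]
    have hlogs1 : (1:ℝ) ≤ Real.log (e + s) := by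
      calc (1:ℝ) = Real.log (Real.exp 1) := (Real.log_exp 1).symm
      _ ≤ _ := Real.log_le_log (Real.exp_pos 1) (by rw [he]; linarith)
    rcases le_total s s₁ with hcase | hcase
    · have hA0 : 0 ≤ s ^ p * Real.log (e + s) ^ q :=
        mul_nonneg (Real.rpow_nonneg hs _) (Real.rpow_nonneg (by linarith) _)
      calc s * t - s ^ p * Real.log (e + s) ^ q ≤ s * t := by linarith
      _ ≤ s₁ * t := mul_le_mul_of_nonneg_right hcase ht0.le
      _ = _ := hid
    · have hs0 : 0 < s := lt_of_lt_of_le hs₁0 hcase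
      have hαL := hlog s hcase
      have h1 : s ^ p = s ^ (1:ℝ) * s ^ (p-1) := by
        rw [← Real.rpow_add hs0]; norm_num
      have h2 : (α * L) ^ q ≤ Real.log (e + s) ^ q :=
        Real.rpow_le_rpow (by positivity) hαL hq.le
      have h3 : s₁ ^ (p-1) ≤ s ^ (p-1) :=
        Real.rpow_le_rpow hs₁0.le hcase hp1.le
      have h4 : s₁ ^ (p-1) = K ^ (p-1) * (t * L ^ (-q)) := by
        rw [hs₁, Real.mul_rpow hK0.le (Real.rpow_nonneg htL0.le _),
          ← Real.rpow_mul htL0.le]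
        have h : (1/(p-1)) * (p-1) = 1 := by field_simp
        rw [h, Real.rpow_one]
      have h5 : (α * L) ^ q = α ^ q * L ^ q := Real.mul_rpow hα0.le hL0.le
      have hKα : 1 ≤ K ^ (p-1) * α ^ q := by
        have hKge : α ^ (-(q/(p-1))) ≤ K := le_max_left _ _
        have hmono := Real.rpow_le_rpow (Real.rpow_nonneg hα0.le _) hKge hp1.le
        rw [← Real.rpow_mul hα0.le] at hmono
        have hexp : (-(q/(p-1))) * (p-1) = -q := by field_simp
        rw [hexp] at hmono
        have hαq : 0 < α ^ q := Real.rpow_pos_of_pos hα0 q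
        have h6 : α ^ (-q) * α ^ q ≤ K ^ (p-1) * α ^ q :=
          mul_le_mul_of_nonneg_right hmono hαq.le
        rwa [← Real.rpow_add hα0, neg_add_cancel, Real.rpow_zero] at h6
      have hLL : L ^ (-q) * L ^ q = 1 := by
        rw [← Real.rpow_add hL0, neg_add_cancel, Real.rpow_zero]
      have step1 : s * s₁ ^ (p-1) * ((α * L) ^ q) ≤ s ^ p * Real.log (e + s) ^ q := by
        rw [h1, Real.rpow_one]
        apply mul_le_mul (mul_le_mul_of_nonneg_left h3 hs0.le) h2
        · positivity
        · have := Real.rpow_nonneg hs0.le (p-1); positivity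
      have step2 : s * t ≤ s * s₁ ^ (p-1) * ((α * L) ^ q) := by
        rw [h4, h5]
        have hre : s * (K ^ (p-1) * (t * L ^ (-q))) * (α ^ q * L ^ q)
             = (s * t) * ((K ^ (p-1) * α ^ q) * (L ^ (-q) * L ^ q)) := by ring
        rw [hre, hLL, mul_one]
        exact le_mul_of_one_le_right (by positivity) hKα
      calc s * t - s ^ p * Real.log (e + s) ^ q ≤ 0 := by linarith [step2.trans step1]
      _ ≤ _ := hRHS0
  exact (hB t ht0.le).2 (by rintro y ⟨s, hs, rfl⟩; exact hub s hs)
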